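/- arXiv:2012.07296 — 6 statements merged into one kernel-verified Lean document; each statement's English description precedes it below -/
import Mathlib

section
/- Let N be a positive integer. For each i ∈ {1,…,N}, let P_i be a nonempty finite set (the mode set), X_i a set with subsets X_{0,i} ⊆ X_i (initial set) and X_{u,i} ⊆ X_i (unsafe set), and for each p_i ∈ P_i let B_{i,p_i} : X_i → [0,∞) be a function and γ_{i,p_i}, λ_{i,p_i} ≥ 0 constants such that B_{i,p_i}(x_i) ≤ γ_{i,p_i} for all x_i ∈ X_{0,i} and B_{i,p_i}(x_i) ≥ λ_{i,p_i} for all x_i ∈ X_{u,i}. Let μ_1,…,μ_N > 0 satisfy Σ_{i=1}^N μ_i·min_{p_i∈P_i} λ_{i,p_i} > Σ_{i=1}^N μ_i·max_{p_i∈P_i} γ_{i,p_i}. Define B(x,p) := Σ_{i=1}^N μ_i B_{i,p_i}(x_i) for x = (x_1,…,x_N) and p = (p_1,…,p_N), and set γ := Σ_{i=1}^N μ_i·max_{p_i∈P_i} γ_{i,p_i} and λ := Σ_{i=1}^N μ_i·min_{p_i∈P_i} λ_{i,p_i}. Then B(x,p) ≤ γ for every x ∈ ∏_{i=1}^N X_{0,i}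 and every p ∈ ∏_{i=1}^N P_i, B(x,p) ≥ λ for every x ∈ ∏_{i=1}^N X_{u,i} and every p ∈ ∏_{i=1}^N P_i, and λ > γ. -/
open Finset

theorem compositional_level_sets_general
    (N : ℕ)
    (P : Fin N → Type) [∀ i, Fintype (P i)] [∀ i, Nonempty (P i)]
    (X : Fin N → Type)
    (X0 Xu : ∀ i, Set (X i))
    (B : ∀ i, P i → X i → ℝ)
    (γ lam : ∀ i, P i → ℝ)
    (hInit : ∀ i (p : P i), ∀ x ∈ X0 i, B i p x ≤ γ i p)
    (hUnsafe : ∀ i (p : P i), ∀ x ∈ Xu i, lam i p ≤ B i p x)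
    (μ : Fin N → ℝ) (hμ : ∀ i, 0 < μ i)
    (hsum : ∑ i, μ i * univ.sup' univ_nonempty (γ i) <
            ∑ i, μ i * univ.inf' univ_nonempty (lam i)) :
    (∀ x : ∀ i, X i, (∀ i, x i ∈ X0 i) → ∀ p : ∀ i, P i,
        ∑ i, μ i * B i (p i) (x i) ≤ ∑ i, μ i * univ.sup' univ_nonempty (γ i)) ∧
    (∀ x : ∀ i, X i, (∀ i, x i ∈ Xu i) → ∀ p : ∀ i, P i,
        ∑ i, μ i * univ.inf' univ_nonempty (lam i) ≤ ∑ i, μ i * B i (p i) (x i)) ∧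
    ∑ i, μ i * univ.sup' univ_nonempty (γ i) <
      ∑ i, μ i * univ.inf' univ_nonempty (lam i) := by
  refine ⟨fun x hx p => ?_, fun x hx p => ?_, hsum⟩
  · gcongr with i
    · exact (hμ i).le
    · exact (hInit i (p i) (x i) (hx i)).trans (le_sup' (γ i) (mem_univ (p i)))
  · gcongr with i
    · exact (hμ i).le
    · exact (inf'_le (lam i) (mem_univ (p i))).trans (hUnsafe i (p i) (x i) (hx i))

/-- Level-set part of the compositionality theorem: the weighted sum
`B(x,p) = ∑ i, μ i * B i (p i) (x i)` of control pseudo-barrier functions is at most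
`γ = ∑ i, μ i * max_{p_i} γ_{i,p_i}` on the product of initial sets, at least
`λ = ∑ i, μ i * min_{p_i} λ_{i,p_i}` on the product of unsafe sets, and `λ > γ`. -/
theorem compositional_level_sets
    (N : ℕ) (hN : 0 < N)
    (P : Fin N → Type) [∀ i, Fintype (P i)] [∀ i, Nonempty (P i)]
    (X : Fin N → Type)
    (X0 Xu : ∀ i, Set (X i))
    (B : ∀ i, P i → X i → ℝ)
    (hBnonneg : ∀ i (p : P i) (x : X i), 0 ≤ B i p x)
    (γ lam : ∀ i, P i → ℝ)
    (hγ : ∀ i (p : P i), 0 ≤ γ i p) (hlam : ∀ i (p : P i), 0 ≤ lam i p)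
    (hInit : ∀ i (p : P i), ∀ x ∈ X0 i, B i p x ≤ γ i p)
    (hUnsafe : ∀ i (p : P i), ∀ x ∈ Xu i, lam i p ≤ B i p x)
    (μ : Fin N → ℝ) (hμ : ∀ i, 0 < μ i)
    (hsum : ∑ i, μ i * univ.sup' univ_nonempty (γ i) <
            ∑ i, μ i * univ.inf' univ_nonempty (lam i)) :
    (∀ x : ∀ i, X i, (∀ i, x i ∈ X0 i) → ∀ p : ∀ i, P i,
        ∑ i, μ i * B i (p i) (x i) ≤ ∑ i, μ i * univ.sup' univ_nonempty (γ i)) ∧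
    (∀ x : ∀ i, X i, (∀ i, x i ∈ Xu i) → ∀ p : ∀ i, P i,
        ∑ i, μ i * univ.inf' univ_nonempty (lam i) ≤ ∑ i, μ i * B i (p i) (x i)) ∧
    ∑ i, μ i * univ.sup' univ_nonempty (γ i) <
      ∑ i, μ i * univ.inf' univ_nonempty (lam i) :=
  compositional_level_sets_general N P X X0 Xu B γ lam hInit hUnsafe μ hμ hsum
end

section
/- Let N be a positive integer and, for each i ∈ {1,…,N}, let P_i be a nonempty finite set and Q_i : P_i × P_i → ℝ a function whose rows sum to zero, i.e. Σ_{p'_i ∈ P_i} Q_i(p_i, p'_i) = 0 for every p_i ∈ P_i. Define Q : (∏_{i=1}^N P_i) × (∏_{i=1}^N P_i) → ℝ by Q(p, p') := Σ_{i=1}^N Q_i(p_i, p'_i) · ∏_{j≠i} 1[p_j = p'_j], where 1[·] is the indicator of equality. Then for all real numbers μ_1,…,μ_N, all functions b_i : P_i → ℝ, and every p ∈ ∏_{i=1}^N P_i: Σ_{p' ∈ ∏_{i=1}^N P_i} Q(p, p') · (Σ_{i=1}^N μ_i b_i(p'_i)) = Σ_{i=1}^N μ_i Σ_{p'_i ∈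 P_i} Q_i(p_i, p'_i) b_i(p'_i). -/
open Finset

/-!
Summing against the indicator `∏_{j ≠ i} 1[p j = p' j]` restricts `p'` to the one-coordinate
updates `update p i x`, so the Kronecker-sum generator acts on any `f` by
`∑ i, ∑ x, Q i (p i) x * f (update p i x)`. For an additively separable `f` every summand except
the `i`-th is constant along these updates, and the zero row sums of `Q i` annihilate it.
-/

open Function

theorem Finset.sum_update_apply {ι M : Type*} [Fintype ι] [DecidableEq ι] [AddCommMonoid M]
    {P : ι → Type*} (g : ∀ i, P i → M) (p : ∀ i, P i) (i : ι) (x : P i) :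
    ∑ j, g j (update p i x j) = g i x + ∑ j ∈ univ.erase i, g j (p j) := by
  rw [← add_sum_erase _ _ (mem_univ i), update_self]
  congr 1
  exact sum_congr rfl fun j hj => by rw [update_of_ne (ne_of_mem_erase hj)]

section KroneckerSum

variable {ι R : Type*} [Fintype ι] [DecidableEq ι] [CommSemiring R]
  {P : ι → Type*} [∀ i, Fintype (P i)] [∀ i, DecidableEq (P i)]

def kroneckerSum (Q : ∀ i, P i → P i → R) (p p' : ∀ i, P i) : R :=
  ∑ i, Q i (p i) (p' i) * ∏ j ∈ univ.erase i, if p j = p' j then 1 else 0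

theorem prod_erase_ite_eq_sum_ite_update_eq (p p' : ∀ i, P i) (i : ι) :
    (∏ j ∈ univ.erase i, if p j = p' j then (1 : R) else 0)
      = ∑ x : P i, if update p i x = p' then 1 else 0 := by
  simp [prod_boole, update_eq_iff, ite_and]

theorem sum_mul_prod_erase_ite_eq (p : ∀ i, P i) (i : ι) (g : (∀ i, P i) → R) :
    ∑ p', g p' * ∏ j ∈ univ.erase i, (if p j = p' j then (1 : R) else 0)
      = ∑ x : P i, g (update p i x) := by
  simp_rw [prod_erase_ite_eq_sum_ite_update_eq, mul_sum, mul_ite, mul_one, mul_zero]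
  rw [sum_comm]
  simp only [sum_ite_eq, mem_univ, if_true]

theorem sum_kroneckerSum_mul (Q : ∀ i, P i → P i → R) (p : ∀ i, P i) (f : (∀ i, P i) → R) :
    ∑ p', kroneckerSum Q p p' * f p' = ∑ i, ∑ x : P i, Q i (p i) x * f (update p i x) := by
  simp_rw [kroneckerSum, sum_mul, mul_right_comm _ _ (f _)]
  rw [sum_comm]
  refine sum_congr rfl fun i _ => ?_
  simpa only [update_self] using sum_mul_prod_erase_ite_eq p i fun p' => Q i (p i) (p' i) * f p'

end KroneckerSum

theorem kronecker_sum_generator_identity_general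
    (N : ℕ)
    (P : Fin N → Type) [∀ i, Fintype (P i)]
    [∀ i, DecidableEq (P i)]
    (Q : ∀ i, P i → P i → ℝ)
    (hrow : ∀ i (p : P i), ∑ p' : P i, Q i p p' = 0)
    (μ : Fin N → ℝ) (b : ∀ i, P i → ℝ) (p : ∀ i, P i) :
    ∑ p' : ∀ i, P i,
        (∑ i, Q i (p i) (p' i) * ∏ j ∈ univ.erase i, (if p j = p' j then (1:ℝ) else 0))
          * (∑ i, μ i * b i (p' i))
      = ∑ i, μ i * ∑ p'i : P i, Q i (p i) p'i * b i p'i := by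
  calc _ = ∑ i, ∑ x : P i, Q i (p i) x * ∑ j, μ j * b j (update p i x j) :=
        sum_kroneckerSum_mul Q p fun p' => ∑ j, μ j * b j (p' j)
    _ = _ := by
      simp_rw [sum_update_apply (fun j y => μ j * b j y), mul_add, sum_add_distrib, ← sum_mul,
        hrow, zero_mul, sum_const_zero, add_zero, mul_sum, mul_left_comm]

/-- Kronecker-sum generator identity: if `Q i` are the subsystem generators (rows summing
to zero) and the interconnected generator over the product mode set is
`Q p p' = ∑ i, Q i (p i) (p' i) * ∏_{j ≠ i} 1[p j = p' j]`, then for weighted-sum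
functions one has
`∑ p', Q p p' * (∑ i, μ i * b i (p' i)) = ∑ i, μ i * ∑ p'_i, Q i (p i) p'_i * b i p'_i`. -/
theorem kronecker_sum_generator_identity
    (N : ℕ) (hN : 0 < N)
    (P : Fin N → Type) [∀ i, Fintype (P i)] [∀ i, Nonempty (P i)]
    [∀ i, DecidableEq (P i)]
    (Q : ∀ i, P i → P i → ℝ)
    (hrow : ∀ i (p : P i), ∑ p' : P i, Q i p p' = 0)
    (μ : Fin N → ℝ) (b : ∀ i, P i → ℝ) (p : ∀ i, P i) :
    ∑ p' : ∀ i, P i,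
        (∑ i, Q i (p i) (p' i) * ∏ j ∈ univ.erase i, (if p j = p' j then (1:ℝ) else 0))
          * (∑ i, μ i * b i (p' i))
      = ∑ i, μ i * ∑ p'i : P i, Q i (p i) p'i * b i p'i :=
  kronecker_sum_generator_identity_general N P Q hrow μ b p
end

section
/- Let N ≥ 2 be an integer. For i, j ∈ {1,…,N}, let μ_i > 0, ψ_i ≥ 0, λ̂_i > 0 and δ̂_{ij} ≥ 0 with δ̂_{ii} = 0 be constants; let κ_i, γ̂_i, α_i : [0,∞) → [0,∞) be of class K∞ (so α_i is a bijection of [0,∞) with inverse α_i⁻¹), and let ρ_i : [0,∞) → [0,∞) be nondecreasing. Assume for all s ≥ 0: κ_i(s) ≥ λ̂_i γ̂_i(s), and ρ_i((N−1)·α_j⁻¹(s)) ≤ δ̂_{ij} γ̂_j(s) for every j ≠ i. Then for all b_1,…,b_N ≥ 0 and y_1,…,y_N ≥ 0 with α_j(y_j) ≤ b_j for every j: Σ_{i=1}^N μ_i ( −κ_i(b_i) + ρ_i(Σ_{j≠i} y_j) + ψ_i ) ≤ Σ_{i=1}^N ( −μ_i λ̂_i + Σ_{j≠i} μ_j δ̂_{ji}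 ) γ̂_i(b_i) + Σ_{i=1}^N μ_i ψ_i. -/
/-!
Each subsystem's interconnection input is bounded by (N − 1) times the largest neighbouring
state, so by monotonicity of `ρ_i` it is bounded by the sum over `j ≠ i` of `ρ_i((N − 1) y_j)`,
and `y_j ≤ α_j⁻¹(b_j)` turns each summand into at most `δ̂_{ij} γ̂_j(b_j)`. Together with
`κ_i ≥ λ̂_i γ̂_i`, weighting by `μ_i ≥ 0` and exchanging the order of the off-diagonal double
sum gives the bound.
-/

open Finset

/-- A function `f : [0,∞) → [0,∞)` (modelled on `ℝ`) is of class K∞: it maps `[0,∞)`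
to `[0,∞)`, is continuous and strictly increasing on `[0,∞)`, satisfies `f 0 = 0`,
and tends to `∞` at `∞`. -/
def IsKInf (f : ℝ → ℝ) : Prop :=
  (∀ s : ℝ, 0 ≤ s → 0 ≤ f s) ∧ ContinuousOn f (Set.Ici 0) ∧
    StrictMonoOn f (Set.Ici 0) ∧ f 0 = 0 ∧
    Filter.Tendsto f Filter.atTop Filter.atTop

theorem Finset.sum_mul_sum_erase_comm {ι R : Type*} [Fintype ι] [DecidableEq ι]
    [NonUnitalSemiring R] (a g : ι → R) (c : ι → ι → R) :
    ∑ i, a i * ∑ j ∈ univ.erase i, c i j * g j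
      = ∑ i, (∑ j ∈ univ.erase i, a j * c j i) * g i := by
  simp only [mul_sum, sum_mul]
  rw [sum_comm' (t' := univ) (s' := fun j => univ.erase j) fun i j => by simp [ne_comm]]
  simp only [mul_assoc]

theorem MonotoneOn.apply_sum_le_sum_apply_card_mul {ι : Type*} {f : ℝ → ℝ}
    (hf : MonotoneOn f (Set.Ici 0)) (hf_nonneg : ∀ x, 0 ≤ x → 0 ≤ f x)
    {s : Finset ι} (hs : s.Nonempty) {y : ι → ℝ} (hy : ∀ j ∈ s, 0 ≤ y j) :
    f (∑ j ∈ s, y j) ≤ ∑ j ∈ s, f (s.card * y j) := by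
  obtain ⟨k, hk, hk_max⟩ := s.exists_max_image y hs
  have hsum_le : ∑ j ∈ s, y j ≤ s.card * y k := by
    simpa [nsmul_eq_mul] using s.sum_le_card_nsmul y (y k) hk_max
  calc f (∑ j ∈ s, y j) ≤ f (s.card * y k) :=
        hf (sum_nonneg hy) (mul_nonneg s.card.cast_nonneg (hy k hk)) hsum_le
    _ ≤ ∑ j ∈ s, f (s.card * y j) :=
        single_le_sum (fun j hj => hf_nonneg _ (mul_nonneg s.card.cast_nonneg (hy j hj))) hk

theorem small_gain_dissipation_chain_general
    (N : ℕ) (hN : 2 ≤ N)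
    (μ ψ lamHat : Fin N → ℝ) (δHat : Fin N → Fin N → ℝ)
    (hμ : ∀ i, 0 < μ i)
    (κ γHat α : Fin N → ℝ → ℝ)
    (hαK : ∀ i, IsKInf (α i))
    -- `αinv i` is the inverse of the bijection `α i : [0,∞) → [0,∞)`
    (αinv : Fin N → ℝ → ℝ)
    (hαinv_nonneg : ∀ i s, 0 ≤ s → 0 ≤ αinv i s)
    (hαinv_right : ∀ i s, 0 ≤ s → α i (αinv i s) = s)
    (ρ : Fin N → ℝ → ℝ)
    (hρmono : ∀ i, MonotoneOn (ρ i) (Set.Ici 0))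
    (hρnonneg : ∀ i s, 0 ≤ s → 0 ≤ ρ i s)
    -- small-gain assumption
    (hgain1 : ∀ i (s : ℝ), 0 ≤ s → lamHat i * γHat i s ≤ κ i s)
    (hgain2 : ∀ i j, j ≠ i → ∀ s : ℝ, 0 ≤ s →
        ρ i ((N - 1 : ℝ) * αinv j s) ≤ δHat i j * γHat j s)
    (b y : Fin N → ℝ) (hb : ∀ i, 0 ≤ b i) (hy : ∀ i, 0 ≤ y i)
    (hαyb : ∀ j, α j (y j) ≤ b j) :
    ∑ i, μ i * (-(κ i (b i)) + ρ i (∑ j ∈ univ.erase i, y j) + ψ i)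
      ≤ ∑ i, (-(μ i * lamHat i) + ∑ j ∈ univ.erase i, μ j * δHat j i) * γHat i (b i)
          + ∑ i, μ i * ψ i := by
  have hN1 : (0 : ℝ) ≤ N - 1 := by
    have : (2 : ℝ) ≤ N := by exact_mod_cast hN
    linarith
  have hcard (i : Fin N) : ((univ.erase i).card : ℝ) = N - 1 := by
    simp [card_erase_of_mem, Nat.cast_pred (by omega : 0 < N)]
  have hy_le (j : Fin N) : y j ≤ αinv j (b j) :=
    (hαK j).2.2.1.le_iff_le (hy j) (hαinv_nonneg j _ (hb j)) |>.mp <|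
      (hαinv_right j _ (hb j)).symm ▸ hαyb j
  have hcoupling (i : Fin N) :
      ρ i (∑ j ∈ univ.erase i, y j) ≤ ∑ j ∈ univ.erase i, δHat i j * γHat j (b j) := by
    have hne : (univ.erase i).Nonempty := card_pos.mp <| by
      rw [card_erase_of_mem (mem_univ i), card_univ, Fintype.card_fin]; omega
    refine ((hρmono i).apply_sum_le_sum_apply_card_mul (hρnonneg i) hne fun j _ => hy j).trans
      (sum_le_sum fun j hj => ?_)
    rw [hcard]
    exact (hρmono i (mul_nonneg hN1 (hy j)) (mul_nonneg hN1 (hαinv_nonneg j _ (hb j)))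
      (mul_le_mul_of_nonneg_left (hy_le j) hN1)).trans (hgain2 i j (ne_of_mem_erase hj) _ (hb j))
  calc ∑ i, μ i * (-(κ i (b i)) + ρ i (∑ j ∈ univ.erase i, y j) + ψ i)
      ≤ ∑ i, μ i * (-(lamHat i * γHat i (b i))
          + ∑ j ∈ univ.erase i, δHat i j * γHat j (b j) + ψ i) :=
        sum_le_sum fun i _ => mul_le_mul_of_nonneg_left
          (by linarith [hgain1 i (b i) (hb i), hcoupling i]) (hμ i).le
    _ = _ := by
        simp only [mul_add, sum_add_distrib, sum_mul_sum_erase_comm, add_mul, mul_neg, neg_mul,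
          mul_assoc]

/-- The dissipation-inequality chain (display (23)) in the proof of the compositionality
theorem: under the small-gain hypotheses `κ_i(s) ≥ λ̂_i γ̂_i(s)` and
`ρ_i((N−1)·α_j⁻¹(s)) ≤ δ̂_{ij} γ̂_j(s)` (j ≠ i), for all `b_i ≥ 0`, `y_i ≥ 0` with
`α_j(y_j) ≤ b_j`:
`∑ i, μ i (−κ_i(b_i) + ρ_i(∑_{j≠i} y_j) + ψ_i)
   ≤ ∑ i, (−μ_i λ̂_i + ∑_{j≠i} μ_j δ̂_{ji}) γ̂_i(b_i) + ∑ i, μ_i ψ_i`. -/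
theorem small_gain_dissipation_chain
    (N : ℕ) (hN : 2 ≤ N)
    (μ ψ lamHat : Fin N → ℝ) (δHat : Fin N → Fin N → ℝ)
    (hμ : ∀ i, 0 < μ i) (hψ : ∀ i, 0 ≤ ψ i) (hlamHat : ∀ i, 0 < lamHat i)
    (hδ : ∀ i j, 0 ≤ δHat i j) (hδdiag : ∀ i, δHat i i = 0)
    (κ γHat α : Fin N → ℝ → ℝ)
    (hκK : ∀ i, IsKInf (κ i)) (hγK : ∀ i, IsKInf (γHat i)) (hαK : ∀ i, IsKInf (α i))
    -- `αinv i` is the inverse of the bijection `α i : [0,∞) → [0,∞)`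
    (αinv : Fin N → ℝ → ℝ)
    (hαinv_nonneg : ∀ i s, 0 ≤ s → 0 ≤ αinv i s)
    (hαinv_right : ∀ i s, 0 ≤ s → α i (αinv i s) = s)
    (hαinv_left : ∀ i t, 0 ≤ t → αinv i (α i t) = t)
    (ρ : Fin N → ℝ → ℝ)
    (hρmono : ∀ i, MonotoneOn (ρ i) (Set.Ici 0))
    (hρnonneg : ∀ i s, 0 ≤ s → 0 ≤ ρ i s)
    -- small-gain assumption
    (hgain1 : ∀ i (s : ℝ), 0 ≤ s → lamHat i * γHat i s ≤ κ i s)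
    (hgain2 : ∀ i j, j ≠ i → ∀ s : ℝ, 0 ≤ s →
        ρ i ((N - 1 : ℝ) * αinv j s) ≤ δHat i j * γHat j s)
    (b y : Fin N → ℝ) (hb : ∀ i, 0 ≤ b i) (hy : ∀ i, 0 ≤ y i)
    (hαyb : ∀ j, α j (y j) ≤ b j) :
    ∑ i, μ i * (-(κ i (b i)) + ρ i (∑ j ∈ univ.erase i, y j) + ψ i)
      ≤ ∑ i, (-(μ i * lamHat i) + ∑ j ∈ univ.erase i, μ j * δHat j i) * γHat i (b i)
          + ∑ i, μ i * ψ i :=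
  small_gain_dissipation_chain_general N hN μ ψ lamHat δHat hμ κ γHat α hαK αinv hαinv_nonneg
    hαinv_right ρ hρmono hρnonneg hgain1 hgain2 b y hb hy hαyb
end

section
/- Let N ≥ 1 be an integer, μ_i > 0 and c_i > 0 real constants for i ∈ {1,…,N}, and γ̂_1,…,γ̂_N : [0,∞) → [0,∞) functions of class K∞. Define κ : [0,∞) → [0,∞) by κ(s) := inf { Σ_{i=1}^N c_i γ̂_i(b_i) : b ∈ [0,∞)^N, Σ_{i=1}^N μ_i b_i = s }. Then: (i) for every s ≥ 0 the infimum is attained; (ii) κ(0) = 0; (iii) κ is strictly increasing; (iv) κ is continuous; (v) κ(s) → ∞ as s → ∞ (so κ is of class K∞); and (vi) κ(Σ_{i=1}^N μ_i b_i) ≤ Σ_{i=1}^N c_i γ̂_i(b_i) for every b ∈ [0,∞)^N. -/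
open Finset

/-!
The feasible set `{b ≥ 0 | ∑ μᵢ bᵢ = s}` is compact and the cost `∑ fᵢ(bᵢ)` (with
`fᵢ = cᵢ γ̂ᵢ`) is continuous on it, so the infimum `κ s` is attained. Scaling a minimiser at
level `t` by `s / t < 1` gives a strictly cheaper feasible point at level `s`, so `κ` is
strictly increasing. Putting the whole increment `t - s` on one coordinate `j` of a minimiser
at `s` gives `κ t - κ s ≤ f_j(a + (t - s)/μ_j) - f_j(a)` with `a` in a fixed compact interval,
and uniform continuity of `f_j` there yields continuity of `κ`. Finally, any feasible `b` at
level `s` has a coordinate with `μᵢ bᵢ ≥ s / N`, which forces `κ s → ∞`.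
-/

open Function Filter

theorem IsKInf.const_mul {f : ℝ → ℝ} {c : ℝ} (hf : IsKInf f) (hc : 0 < c) :
    IsKInf (fun s => c * f s) := by
  obtain ⟨hnn, hcont, hmono, h0, htop⟩ := hf
  exact ⟨fun s hs => mul_nonneg hc.le (hnn s hs), continuousOn_const.mul hcont,
    fun s hs t ht hst => mul_lt_mul_of_pos_left (hmono hs ht hst) hc, by simp [h0],
    htop.const_mul_atTop hc⟩

theorem continuousOn_Ici_of_monotoneOn {g : ℝ → ℝ} (hmono : MonotoneOn g (Set.Ici 0))
    (hunif : ∀ T ε, 0 < ε → ∃ δ > 0, ∀ s t, 0 ≤ s → s ≤ t → t ≤ T → t - s < δ →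
      g t - g s < ε) :
    ContinuousOn g (Set.Ici 0) := by
  refine fun x hx => Metric.continuousWithinAt_iff.2 fun ε hε => ?_
  obtain ⟨δ, hδ, hg⟩ := hunif (x + 1) ε hε
  refine ⟨min δ 1, lt_min hδ one_pos, fun y hy hyx => ?_⟩
  simp only [lt_min_iff, Real.dist_eq, abs_sub_lt_iff] at hyx
  rw [Real.dist_eq, abs_sub_lt_iff]
  rcases le_total x y with hxy | hyx'
  · have := hg x y hx hxy (by linarith) (by linarith)
    have := hmono hx hy hxy
    constructor <;> linarith
  · have := hg y x hy hyx' (by linarith) (by linarith)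
    have := hmono hy hx hyx'
    constructor <;> linarith

theorem sum_apply_update {ι α M : Type*} [Fintype ι] [DecidableEq ι] [AddCommGroup M]
    (F : ι → α → M) (b : ι → α) (j : ι) (v : α) :
    ∑ i, F i (update b j v i) = ∑ i, F i (b i) + (F j v - F j (b j)) := by
  rw [show (fun i => F i (update b j v i)) = update (fun i => F i (b i)) j (F j v) from
      funext (apply_update F b j v), sum_update_of_mem (mem_univ j),
    ← add_sum_erase _ _ (mem_univ j), sdiff_singleton_eq_erase]
  abel

section
variable {ι : Type*} [Fintype ι]

def feasibleSet (μ : ι → ℝ) (s : ℝ) : Set (ι → ℝ) := {b | 0 ≤ b ∧ ∑ i, μ i * b i = s}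

noncomputable def infCost (μ : ι → ℝ) (f : ι → ℝ → ℝ) (s : ℝ) : ℝ :=
  sInf ((fun b => ∑ i, f i (b i)) '' feasibleSet μ s)

variable {μ : ι → ℝ} {f : ι → ℝ → ℝ} {b : ι → ℝ} {s t : ℝ}

theorem mul_le_of_mem_feasibleSet (hμ : ∀ i, 0 ≤ μ i) (hb : b ∈ feasibleSet μ s) (i : ι) :
    μ i * b i ≤ s :=
  hb.2 ▸ single_le_sum (fun j _ => mul_nonneg (hμ j) (hb.1 j)) (mem_univ i)

theorem feasibleSet_nonempty [Nonempty ι] (hμ : ∀ i, 0 < μ i) (hs : 0 ≤ s) :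
    (feasibleSet μ s).Nonempty := by
  have hM : 0 < ∑ i, μ i := sum_pos (fun i _ => hμ i) univ_nonempty
  refine ⟨fun _ => s / ∑ i, μ i, fun _ => div_nonneg hs hM.le, ?_⟩
  rw [← sum_mul, mul_div_cancel₀ s hM.ne']

theorem isCompact_feasibleSet (hμ : ∀ i, 0 < μ i) : IsCompact (feasibleSet μ s) := by
  refine (isCompact_Icc (b := fun i => s / μ i)).of_isClosed_subset ?_
    (fun b hb => ⟨hb.1, fun i => ?_⟩)
  · exact isClosed_Ici.inter (isClosed_eq (by fun_prop) continuous_const)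
  · rw [le_div_iff₀' (hμ i)]
    exact mul_le_of_mem_feasibleSet (fun j => (hμ j).le) hb i

theorem mul_mem_feasibleSet {r : ℝ} (hb : b ∈ feasibleSet μ t) (hr : 0 ≤ r) :
    (fun i => r * b i) ∈ feasibleSet μ (r * t) := by
  refine ⟨fun i => mul_nonneg hr (hb.1 i), ?_⟩
  simp_rw [← hb.2, mul_sum, mul_left_comm]

theorem update_mem_feasibleSet [DecidableEq ι] (hb : b ∈ feasibleSet μ s) {j : ι}
    (hμ : 0 < μ j) (hst : s ≤ t) :
    update b j (b j + (t - s) / μ j) ∈ feasibleSet μ t := by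
  refine ⟨le_update_iff.2 ⟨add_nonneg (hb.1 j) (div_nonneg (sub_nonneg.2 hst) hμ.le),
    fun i _ => hb.1 i⟩, ?_⟩
  rw [sum_apply_update (fun i x => μ i * x), hb.2]
  field_simp
  ring

theorem zero_mem_lowerBounds_image_feasibleSet (hf : ∀ i x, 0 ≤ x → 0 ≤ f i x) :
    0 ∈ lowerBounds ((fun b => ∑ i, f i (b i)) '' feasibleSet μ s) :=
  Set.forall_mem_image.2 fun _ hb => sum_nonneg fun i _ => hf i _ (hb.1 i)

theorem infCost_nonneg (hf : ∀ i x, 0 ≤ x → 0 ≤ f i x) : 0 ≤ infCost μ f s :=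
  Real.sInf_nonneg (zero_mem_lowerBounds_image_feasibleSet hf)

theorem infCost_le (hf : ∀ i x, 0 ≤ x → 0 ≤ f i x) (hb : b ∈ feasibleSet μ s) :
    infCost μ f s ≤ ∑ i, f i (b i) :=
  csInf_le ⟨0, zero_mem_lowerBounds_image_feasibleSet hf⟩ (Set.mem_image_of_mem _ hb)

theorem infCost_zero (hf : ∀ i x, 0 ≤ x → 0 ≤ f i x) (hf0 : ∀ i, f i 0 = 0) :
    infCost μ f 0 = 0 :=
  le_antisymm (by simpa [hf0] using infCost_le hf (b := 0) ⟨le_rfl, by simp⟩)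
    (infCost_nonneg hf)

theorem exists_infCost_eq [Nonempty ι] (hμ : ∀ i, 0 < μ i)
    (hf : ∀ i, ContinuousOn (f i) (Set.Ici 0)) (hs : 0 ≤ s) :
    ∃ b ∈ feasibleSet μ s, infCost μ f s = ∑ i, f i (b i) := by
  have hcont : ContinuousOn (fun b : ι → ℝ => ∑ i, f i (b i)) (feasibleSet μ s) :=
    continuousOn_finsetSum _ fun i _ =>
      (hf i).comp (continuous_apply i).continuousOn fun b hb => hb.1 i
  obtain ⟨b, hb, hmin⟩ :=
    (isCompact_feasibleSet hμ).exists_isMinOn (feasibleSet_nonempty hμ hs) hcont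
  exact ⟨b, hb, IsLeast.csInf_eq ⟨Set.mem_image_of_mem _ hb,
    Set.forall_mem_image.2 fun _ hx => hmin hx⟩⟩

theorem sum_apply_mul_lt (hf : ∀ i, StrictMonoOn (f i) (Set.Ici 0)) (hb : 0 ≤ b) {j : ι}
    (hj : 0 < b j) {r : ℝ} (hr0 : 0 ≤ r) (hr1 : r < 1) :
    ∑ i, f i (r * b i) < ∑ i, f i (b i) := by
  have hrb : ∀ i, r * b i ∈ Set.Ici 0 := fun i => mul_nonneg hr0 (hb i)
  exact sum_lt_sum
    (fun i _ => (hf i).monotoneOn (hrb i) (hb i) (mul_le_of_le_one_left (hb i) hr1.le))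
    ⟨j, mem_univ j, hf j (hrb j) (hb j) (mul_lt_of_lt_one_left hj hr1)⟩

theorem strictMonoOn_infCost [Nonempty ι] (hμ : ∀ i, 0 < μ i)
    (hf0 : ∀ i x, 0 ≤ x → 0 ≤ f i x) (hfc : ∀ i, ContinuousOn (f i) (Set.Ici 0))
    (hfm : ∀ i, StrictMonoOn (f i) (Set.Ici 0)) :
    StrictMonoOn (infCost μ f) (Set.Ici 0) := by
  intro s hs t ht hst
  have ht0 : 0 < t := lt_of_le_of_lt hs hst
  have hr0 : 0 ≤ s / t := div_nonneg hs ht0.le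
  obtain ⟨b, hb, hκb⟩ := exists_infCost_eq hμ hfc ht
  obtain ⟨j, -, hj⟩ : ∃ j ∈ univ, 0 < μ j * b j :=
    exists_lt_of_sum_lt (by simpa [hb.2] using ht0)
  have hsb : (fun i => s / t * b i) ∈ feasibleSet μ s := by
    simpa [div_mul_cancel₀ s ht0.ne'] using mul_mem_feasibleSet hb hr0
  calc infCost μ f s ≤ ∑ i, f i (s / t * b i) := infCost_le hf0 hsb
    _ < ∑ i, f i (b i) :=
      sum_apply_mul_lt hfm hb.1 (pos_of_mul_pos_right hj (hμ j).le) hr0 ((div_lt_one ht0).2 hst)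
    _ = infCost μ f t := hκb.symm

theorem exists_infCost_le_add (hμ : ∀ i, 0 < μ i) (hf0 : ∀ i x, 0 ≤ x → 0 ≤ f i x)
    (hfc : ∀ i, ContinuousOn (f i) (Set.Ici 0)) (j : ι) (hs : 0 ≤ s) (hst : s ≤ t) :
    ∃ a, 0 ≤ a ∧ μ j * a ≤ s ∧
      infCost μ f t ≤ infCost μ f s + (f j (a + (t - s) / μ j) - f j a) := by
  classical
  have : Nonempty ι := ⟨j⟩
  obtain ⟨b, hb, hκb⟩ := exists_infCost_eq hμ hfc hs
  refine ⟨b j, hb.1 j, mul_le_of_mem_feasibleSet (fun i => (hμ i).le) hb j, ?_⟩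
  calc infCost μ f t ≤ ∑ i, f i (update b j (b j + (t - s) / μ j) i) :=
        infCost_le hf0 (update_mem_feasibleSet hb (hμ j) hst)
    _ = _ := by rw [sum_apply_update, hκb]

theorem exists_pos_infCost_sub_lt (hμ : ∀ i, 0 < μ i) (hf0 : ∀ i x, 0 ≤ x → 0 ≤ f i x)
    (hfc : ∀ i, ContinuousOn (f i) (Set.Ici 0)) (j : ι) (T : ℝ) {ε : ℝ} (hε : 0 < ε) :
    ∃ δ > 0, ∀ s t, 0 ≤ s → s ≤ t → t ≤ T → t - s < δ →
      infCost μ f t - infCost μ f s < ε := by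
  obtain ⟨d, hd, hfd⟩ := Metric.uniformContinuousOn_iff.1
    (isCompact_Icc.uniformContinuousOn_of_continuous
      ((hfc j).mono (Set.Icc_subset_Ici_self : Set.Icc 0 (T / μ j) ⊆ _))) ε hε
  refine ⟨d * μ j, mul_pos hd (hμ j), fun s t hs hst htT hts => ?_⟩
  obtain ⟨a, ha0, has, hκ⟩ := exists_infCost_le_add hμ hf0 hfc j hs hst
  have hδ : 0 ≤ (t - s) / μ j := div_nonneg (sub_nonneg.2 hst) (hμ j).le
  have haδ : a + (t - s) / μ j ≤ T / μ j := by
    rw [le_div_iff₀ (hμ j), add_mul, div_mul_cancel₀ _ (hμ j).ne']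
    linarith
  have hclose := hfd _ ⟨add_nonneg ha0 hδ, haδ⟩ a ⟨ha0, (le_add_of_nonneg_right hδ).trans haδ⟩
    (by rwa [Real.dist_eq, add_sub_cancel_left, abs_of_nonneg hδ, div_lt_iff₀ (hμ j)])
  rw [Real.dist_eq] at hclose
  linarith [le_abs_self (f j (a + (t - s) / μ j) - f j a)]

theorem continuousOn_infCost [Nonempty ι] (hμ : ∀ i, 0 < μ i)
    (hf0 : ∀ i x, 0 ≤ x → 0 ≤ f i x) (hfc : ∀ i, ContinuousOn (f i) (Set.Ici 0))
    (hfm : ∀ i, StrictMonoOn (f i) (Set.Ici 0)) :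
    ContinuousOn (infCost μ f) (Set.Ici 0) :=
  continuousOn_Ici_of_monotoneOn (strictMonoOn_infCost hμ hf0 hfc hfm).monotoneOn
    fun T _ hε => exists_pos_infCost_sub_lt hμ hf0 hfc (Classical.arbitrary ι) T hε

theorem exists_div_card_le_mul [Nonempty ι] (hb : b ∈ feasibleSet μ s) :
    ∃ i, s / Fintype.card ι ≤ μ i * b i := by
  have hN : (Fintype.card ι : ℝ) ≠ 0 := Nat.cast_ne_zero.2 Fintype.card_ne_zero
  obtain ⟨i, -, hi⟩ := exists_le_of_sum_le univ_nonempty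
    (f := fun _ => s / Fintype.card ι) (g := fun i => μ i * b i)
    (by rw [sum_const, card_univ, nsmul_eq_mul, mul_div_cancel₀ _ hN, hb.2])
  exact ⟨i, hi⟩

theorem tendsto_infCost_atTop [Nonempty ι] (hμ : ∀ i, 0 < μ i)
    (hf0 : ∀ i x, 0 ≤ x → 0 ≤ f i x) (hfc : ∀ i, ContinuousOn (f i) (Set.Ici 0))
    (hfm : ∀ i, StrictMonoOn (f i) (Set.Ici 0)) (hft : ∀ i, Tendsto (f i) atTop atTop) :
    Tendsto (infCost μ f) atTop atTop := by
  refine tendsto_atTop.2 fun K => ?_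
  have hN : (0 : ℝ) < Fintype.card ι := by exact_mod_cast Fintype.card_pos
  have hK : ∀ᶠ s in atTop, ∀ i, K ≤ f i (s / Fintype.card ι / μ i) := eventually_all.2 fun i =>
    tendsto_atTop.1 ((hft i).comp ((tendsto_id.atTop_div_const hN).atTop_div_const (hμ i))) K
  filter_upwards [hK, eventually_ge_atTop 0] with s hK hs
  obtain ⟨b, hb, hκb⟩ := exists_infCost_eq hμ hfc hs
  obtain ⟨i, hi⟩ := exists_div_card_le_mul hb
  have hsi : 0 ≤ s / Fintype.card ι / μ i := by have := hμ i; positivity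
  have hbi : s / Fintype.card ι / μ i ≤ b i := by rwa [div_le_iff₀' (hμ i)]
  calc K ≤ f i (s / Fintype.card ι / μ i) := hK i
    _ ≤ f i (b i) := (hfm i).monotoneOn hsi (hsi.trans hbi) hbi
    _ ≤ ∑ j, f j (b j) :=
      single_le_sum (fun j _ => hf0 j _ (hb.1 j)) (mem_univ i)
    _ = infCost μ f s := hκb.symm

theorem isKInf_infCost [Nonempty ι] (hμ : ∀ i, 0 < μ i) (hf : ∀ i, IsKInf (f i)) :
    IsKInf (infCost μ f) := by
  choose hf0 hfc hfm hfz hft using hf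
  exact ⟨fun _ _ => infCost_nonneg hf0, continuousOn_infCost hμ hf0 hfc hfm,
    strictMonoOn_infCost hμ hf0 hfc hfm, infCost_zero hf0 hfz,
    tendsto_infCost_atTop hμ hf0 hfc hfm hft⟩

end

/-- The function `κ(s) := inf { ∑ i, c_i γ̂_i(b_i) : b ∈ [0,∞)^N, ∑ i, μ_i b_i = s }`
is well-defined (the infimum is attained for `s ≥ 0`), satisfies `κ(0) = 0`, is strictly
increasing and continuous on `[0,∞)`, tends to `∞` at `∞`, and satisfies
`κ(∑ i, μ_i b_i) ≤ ∑ i, c_i γ̂_i(b_i)` for every `b ∈ [0,∞)^N`. -/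
theorem kappa_inf_is_KInf
    (N : ℕ) (hN : 1 ≤ N)
    (μ c : Fin N → ℝ) (hμ : ∀ i, 0 < μ i) (hc : ∀ i, 0 < c i)
    (γHat : Fin N → ℝ → ℝ) (hγK : ∀ i, IsKInf (γHat i))
    (κ : ℝ → ℝ)
    (hκdef : ∀ s : ℝ, κ s = sInf {t : ℝ | ∃ b : Fin N → ℝ,
        (∀ i, 0 ≤ b i) ∧ (∑ i, μ i * b i) = s ∧ t = ∑ i, c i * γHat i (b i)}) :
    (∀ s : ℝ, 0 ≤ s → ∃ b : Fin N → ℝ,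
        (∀ i, 0 ≤ b i) ∧ (∑ i, μ i * b i) = s ∧ κ s = ∑ i, c i * γHat i (b i)) ∧
    κ 0 = 0 ∧
    StrictMonoOn κ (Set.Ici 0) ∧
    ContinuousOn κ (Set.Ici 0) ∧
    Filter.Tendsto κ Filter.atTop Filter.atTop ∧
    (∀ b : Fin N → ℝ, (∀ i, 0 ≤ b i) →
        κ (∑ i, μ i * b i) ≤ ∑ i, c i * γHat i (b i)) := by
  have : Nonempty (Fin N) := ⟨⟨0, hN⟩⟩
  have hf : ∀ i, IsKInf (fun s => c i * γHat i s) := fun i => (hγK i).const_mul (hc i)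
  obtain rfl : κ = infCost μ (fun i s => c i * γHat i s) := by
    ext s
    rw [hκdef, infCost]
    congr 1
    ext t
    simp only [feasibleSet, Set.mem_image, Set.mem_ofPred_eq, Pi.le_def, Pi.zero_apply, and_assoc]
    exact exists_congr fun b => and_congr_right' (and_congr_right' eq_comm)
  obtain ⟨-, hcont, hmono, hzero, htop⟩ := isKInf_infCost hμ hf
  refine ⟨fun s hs => ?_, hzero, hmono, hcont, htop,
    fun b hb => infCost_le (fun i => (hf i).1) ⟨hb, rfl⟩⟩
  obtain ⟨b, ⟨hb, hbs⟩, hκb⟩ := exists_infCost_eq hμ (fun i => (hf i).2.1) hs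
  exact ⟨b, hb, hbs, hκb⟩
end

section
/- Let N ≥ 1, let Λ = diag(λ̂_1,…,λ̂_N) be a real diagonal matrix with λ̂_i > 0 for all i, and let Δ be an N×N real matrix with all entries nonnegative. If every complex eigenvalue z of the matrix Λ⁻¹Δ satisfies |z| < 1 (i.e. the spectral radius of Λ⁻¹Δ is strictly less than one), then there exists a vector μ ∈ ℝ^N with all entries strictly positive such that every entry of the row vector μᵀ(−Λ+Δ) is strictly negative. -/
/-!
Put `M = Λ⁻¹Δ`. By Gelfand's formula, `ρ(M) < 1` forces `Mⁿ → 0`, so for some `n` every column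
sum of `Mⁿ` is below `1`. The row vector `ν = 𝟙ᵀ(I + M + ⋯ + Mⁿ⁻¹)` is nonnegative and telescopes
to `νM = ν - 𝟙ᵀ + 𝟙ᵀMⁿ < ν`, whence `ν > νM ≥ 0`. Finally `μᵀ = νᵀΛ⁻¹` gives
`μᵀ(-Λ + Δ) = -νᵀ + νᵀM < 0`.
-/

open Finset Matrix Filter Topology

theorem tendsto_pow_atTop_nhds_zero_of_spectralRadius_lt_one {A : Type*} [NormedRing A]
    [NormedAlgebra ℂ A] [CompleteSpace A] {a : A} (ha : spectralRadius ℂ a < 1) :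
    Tendsto (a ^ ·) atTop (𝓝 0) := by
  obtain ⟨r, hρr, hr1⟩ := ENNReal.lt_iff_exists_nnreal_btwn.mp ha
  have hgelfand := spectrum.pow_nnnorm_pow_one_div_tendsto_nhds_spectralRadius a
  have hbound : ∀ᶠ n : ℕ in atTop, ‖a ^ n‖ ≤ (r : ℝ) ^ n := by
    filter_upwards [hgelfand.eventually_lt_const hρr, eventually_gt_atTop 0] with n hn hn0
    rw [one_div, ENNReal.rpow_inv_lt_iff (by positivity), ENNReal.rpow_natCast] at hn
    exact_mod_cast hn.le
  exact squeeze_zero_norm' hbound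
    (tendsto_pow_atTop_nhds_zero_of_lt_one r.coe_nonneg (by exact_mod_cast hr1))

namespace Matrix

variable {ι R : Type*} [Fintype ι]

theorem vecMul_nonneg [Semiring R] [PartialOrder R] [IsOrderedRing R] {v : ι → R}
    {M : Matrix ι ι R} (hv : 0 ≤ v) (hM : ∀ i j, 0 ≤ M i j) : 0 ≤ v ᵥ* M :=
  fun j => Finset.sum_nonneg fun i _ => mul_nonneg (hv i) (hM i j)

variable [DecidableEq ι]

theorem tendsto_pow_atTop_nhds_zero_of_forall_norm_lt_one (M : Matrix ι ι ℝ)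
    (hM : ∀ z ∈ spectrum ℂ (M.map (Complex.ofReal ·)), ‖z‖ < 1) :
    Tendsto (M ^ ·) atTop (𝓝 0) := by
  cases isEmpty_or_nonempty ι
  · simpa only [Subsingleton.elim _ (0 : Matrix ι ι ℝ)] using tendsto_const_nhds
  let := Matrix.linftyOpNormedRing (n := ι) (α := ℂ)
  let := Matrix.linftyOpNormedAlgebra (n := ι) (R := ℂ) (α := ℂ)
  have : CompleteSpace (Matrix ι ι ℂ) := FiniteDimensional.complete ℂ _
  have hρ : spectralRadius ℂ (M.map (Complex.ofReal ·)) < 1 := by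
    simpa using spectrum.spectralRadius_lt_of_forall_lt _ (r := 1)
      fun z hz => by exact_mod_cast hM z hz
  have hre : Continuous fun A : Matrix ι ι ℂ => A.map Complex.re :=
    continuous_id.matrix_map Complex.continuous_re
  convert (hre.tendsto 0).comp (tendsto_pow_atTop_nhds_zero_of_spectralRadius_lt_one hρ)
    using 2 with n
  · have hpow : (M.map (Complex.ofReal ·)) ^ n = (M ^ n).map (Complex.ofReal ·) :=
      (map_pow Complex.ofRealHom.mapMatrix M n).symm
    ext i j
    simp [hpow]
  · simp

theorem inv_diagonal_of_forall_ne_zero [Field R] {d : ι → R} (hd : ∀ i, d i ≠ 0) :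
    (diagonal d)⁻¹ = diagonal d⁻¹ :=
  inv_eq_left_inv <| by
    rw [diagonal_mul_diagonal, ← diagonal_one]
    exact congrArg diagonal (funext fun i => inv_mul_cancel₀ (hd i))

variable [Field R] [LinearOrder R] [IsStrictOrderedRing R]

theorem exists_pos_vecMul_lt_of_vecMul_pow_lt_one {M : Matrix ι ι R} (hM : ∀ i j, 0 ≤ M i j)
    {n : ℕ} (hn : ∀ j, (1 ᵥ* M ^ n) j < 1) :
    ∃ ν : ι → R, (∀ j, 0 < ν j) ∧ ∀ j, (ν ᵥ* M) j < ν j := by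
  set ν := ∑ k ∈ range n, 1 ᵥ* M ^ k
  have hpow : ∀ k, 0 ≤ 1 ᵥ* M ^ k := fun k => by
    induction k with
    | zero => simp [zero_le_one]
    | succ k ih => rw [pow_succ, ← vecMul_vecMul]; exact vecMul_nonneg ih hM
  have hν : 0 ≤ ν := Finset.sum_nonneg fun k _ => hpow k
  have htelescope : ν ᵥ* M + 1 = ν + 1 ᵥ* M ^ n := by
    rw [sum_vecMul]
    simp only [vecMul_vecMul, ← pow_succ]
    have h := (sum_range_succ' (fun k => 1 ᵥ* M ^ k) n).symm
    rwa [sum_range_succ, pow_zero, vecMul_one] at h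
  have hlt : ∀ j, (ν ᵥ* M) j < ν j := fun j => by
    have := congrFun htelescope j
    simp only [Pi.add_apply, Pi.one_apply] at this
    linarith [hn j]
  exact ⟨ν, fun j => (vecMul_nonneg hν hM j).trans_lt (hlt j), hlt⟩

theorem exists_pos_vecMul_lt_of_tendsto_pow [TopologicalSpace R] [OrderTopology R]
    {M : Matrix ι ι R} (hM : ∀ i j, 0 ≤ M i j) (hpow : Tendsto (M ^ ·) atTop (𝓝 0)) :
    ∃ ν : ι → R, (∀ j, 0 < ν j) ∧ ∀ j, (ν ᵥ* M) j < ν j := by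
  have hcol : Tendsto (fun n => 1 ᵥ* M ^ n) atTop (𝓝 0) := by
    simpa [Function.comp_def] using
      ((continuous_const.matrix_vecMul continuous_id).tendsto 0).comp hpow
  obtain ⟨n, hn⟩ := (eventually_all.mpr fun j =>
    (tendsto_pi_nhds.mp hcol j).eventually_lt_const zero_lt_one).exists
  exact exists_pos_vecMul_lt_of_vecMul_pow_lt_one hM hn

theorem exists_pos_vecMul_neg_diagonal_add_neg {d : ι → R} (hd : ∀ i, 0 < d i)
    {Δ : Matrix ι ι R} {ν : ι → R} (hν : ∀ j, 0 < ν j)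
    (hlt : ∀ j, (ν ᵥ* ((diagonal d)⁻¹ * Δ)) j < ν j) :
    ∃ μ : ι → R, (∀ i, 0 < μ i) ∧ ∀ j, (μ ᵥ* (-diagonal d + Δ)) j < 0 := by
  have hμ : ν ᵥ* diagonal d⁻¹ = ν / d := funext fun i => by
    simp [vecMul_diagonal, div_eq_mul_inv]
  refine ⟨ν / d, fun i => div_pos (hν i) (hd i), fun j => ?_⟩
  have := hlt j
  rw [inv_diagonal_of_forall_ne_zero fun i => (hd i).ne', ← vecMul_vecMul, hμ] at this
  rw [vecMul_add, vecMul_neg, Pi.add_apply, Pi.neg_apply, vecMul_diagonal, Pi.div_apply,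
    div_mul_cancel₀ _ (hd j).ne']
  linarith

end Matrix

theorem small_gain_spectral_radius_general
    (N : ℕ)
    (lamHat : Fin N → ℝ) (hlam : ∀ i, 0 < lamHat i)
    (Δ : Matrix (Fin N) (Fin N) ℝ) (hΔ : ∀ i j, 0 ≤ Δ i j)
    (hspec : ∀ z ∈ spectrum ℂ
        (((Matrix.diagonal lamHat)⁻¹ * Δ).map (Complex.ofReal ·)),
        ‖z‖ < 1) :
    ∃ μ : Fin N → ℝ, (∀ i, 0 < μ i) ∧
      ∀ j, ∑ i, μ i * (-(Matrix.diagonal lamHat) + Δ) i j < 0 := by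
  have hM : ∀ i j, 0 ≤ ((diagonal lamHat)⁻¹ * Δ) i j := fun i j => by
    rw [inv_diagonal_of_forall_ne_zero fun i => (hlam i).ne', diagonal_mul]
    exact mul_nonneg (inv_nonneg.mpr (hlam i).le) (hΔ i j)
  obtain ⟨ν, hν, hνM⟩ := exists_pos_vecMul_lt_of_tendsto_pow hM
    (tendsto_pow_atTop_nhds_zero_of_forall_norm_lt_one _ hspec)
  exact exists_pos_vecMul_neg_diagonal_add_neg hlam hν hνM

/-- Remark 4.5: if `Λ = diag(λ̂_1,…,λ̂_N)` with `λ̂_i > 0`, `Δ` has nonnegative entries,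
and the spectral radius of `Λ⁻¹Δ` is strictly less than one (every complex eigenvalue
has modulus `< 1`), then there exists a strictly positive vector `μ` whose row vector
`μᵀ(−Λ+Δ)` has all entries strictly negative. -/
theorem small_gain_spectral_radius
    (N : ℕ) (hN : 1 ≤ N)
    (lamHat : Fin N → ℝ) (hlam : ∀ i, 0 < lamHat i)
    (Δ : Matrix (Fin N) (Fin N) ℝ) (hΔ : ∀ i j, 0 ≤ Δ i j)
    (hspec : ∀ z ∈ spectrum ℂ
        (((Matrix.diagonal lamHat)⁻¹ * Δ).map (Complex.ofReal ·)),
        ‖z‖ < 1) :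
    ∃ μ : Fin N → ℝ, (∀ i, 0 < μ i) ∧
      ∀ j, ∑ i, μ i * (-(Matrix.diagonal lamHat) + Δ) i j < 0 :=
  small_gain_spectral_radius_general N lamHat hlam Δ hΔ hspec
end

section
/- Let N ≥ 2 be an integer. For each i ∈ {1,…,N}, let P_i be a nonempty finite set and Q_i : P_i × P_i → ℝ a function with Σ_{p'_i ∈ P_i} Q_i(p_i, p'_i) = 0 for every p_i ∈ P_i; define Q on ∏_{i=1}^N P_i by Q(p, p') := Σ_{i=1}^N Q_i(p_i, p'_i)·∏_{j≠i} 1[p_j = p'_j]. Let μ_i > 0, λ̂_i > 0, δ̂_{ij} ≥ 0 with δ̂_{ii} = 0 be constants such that c_i := μ_i λ̂_i − Σ_{j≠i} μ_j δ̂_{ji} > 0 for every i. Let κ_i, γ̂_i, α_i : [0,∞) → [0,∞) be of class K∞ and ρ_i : [0,∞) → [0,∞) nondecreasing, with κ_i(s) ≥ λ̂_i γ̂_i(s) and ρ_i((N−1)·α_j⁻¹(s)) ≤ δ̂_{ij} γ̂_j(s) for all s ≥ 0 and all j ≠ i. For each i and p_i ∈ P_i let ψ_{i,p_i} ≥ 0,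 and set ψ := Σ_{i=1}^N μ_i·max_{p_i∈P_i} ψ_{i,p_i} and κ(s) := inf{ Σ_{i=1}^N c_i γ̂_i(β_i) : β ∈ [0,∞)^N, Σ_{i=1}^N μ_i β_i = s }. Fix p ∈ ∏_{i=1}^N P_i and suppose each i is given a real number a_i, a function b_i : P_i → [0,∞), and a real y_i ≥ 0 with α_i(y_i) ≤ b_i(p_i), such that a_i + Σ_{p'_i ∈ P_i} Q_i(p_i, p'_i) b_i(p'_i) ≤ −κ_i(b_i(p_i)) + ρ_i(Σ_{j≠i} y_j) + ψ_{i,p_i}. Then Σ_{i=1}^N μ_i a_i + Σ_{p' ∈ ∏_i P_i} Q(p, p')·(Σ_{i=1}^N μ_i b_i(p'_i)) ≤ −κ(Σ_{i=1}^N μ_i b_i(p_i)) + ψ. -/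
/-!
The product generator acts on a separable function `∑ᵢ μᵢ bᵢ(p'ᵢ)` componentwise: along a jump
of component `i` the other summands stay constant and are killed by the zero row sums of `Qᵢ`.
Weighting the local dissipation inequalities by `μᵢ` and summing therefore bounds the composed
left-hand side. The internal-input term `ρᵢ(∑_{j≠i} yⱼ)` is at most `ρᵢ((N-1) α_{j₀}⁻¹(b_{j₀}))`
for the largest `y_{j₀}`, hence at most `∑_{j≠i} δ̂ᵢⱼ γ̂ⱼ(bⱼ)`; exchanging the double sum, the
decay terms combine into `-∑ cᵢ γ̂ᵢ(bᵢ)`, which is at most `-κ(∑ μᵢ bᵢ)` because `β = b(p)` is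
admissible in the infimum defining `κ`.
-/

open Finset

section ProductGenerator

variable {ι R : Type*} [Fintype ι] [DecidableEq ι] [CommSemiring R]
  {P : ι → Type*} [∀ i, Fintype (P i)] [∀ i, DecidableEq (P i)]

/-- The generator `Q` of the paper on `∏ᵢ Pᵢ`: only one component jumps at a time. -/
def prodGenerator (Q : ∀ i, P i → P i → R) (p p' : ∀ i, P i) : R :=
  ∑ i, Q i (p i) (p' i) * ∏ j ∈ univ.erase i, if p j = p' j then 1 else 0

omit [∀ i, Fintype (P i)] [∀ i, DecidableEq (P i)] in
lemma forall_erase_eq_iff_exists_update_eq (p p' : ∀ i, P i) (i : ι) :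
    (∀ j ∈ univ.erase i, p j = p' j) ↔ ∃ q, Function.update p i q = p' := by
  constructor
  · intro h
    refine ⟨p' i, funext fun j => ?_⟩
    rcases eq_or_ne j i with rfl | hj
    · exact Function.update_self ..
    · rw [Function.update_of_ne hj, h j (mem_erase.2 ⟨hj, mem_univ j⟩)]
  · rintro ⟨q, rfl⟩ j hj
    rw [Function.update_of_ne (ne_of_mem_erase hj)]

lemma sum_prod_erase_ite_mul (p : ∀ i, P i) (i : ι) (g : (∀ i, P i) → R) :
    ∑ p', (∏ j ∈ univ.erase i, if p j = p' j then (1 : R) else 0) * g p'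
      = ∑ q, g (Function.update p i q) := by
  have hfilter : univ.filter (fun p' => ∀ j ∈ univ.erase i, p j = p' j)
      = univ.image (Function.update p i) := by
    ext p'
    simp only [mem_filter, mem_univ, true_and, mem_image, forall_erase_eq_iff_exists_update_eq]
  simp only [prod_boole, boole_mul]
  rw [← sum_image fun _ _ _ _ h => Function.update_injective p i h, ← hfilter, sum_filter]
  congr!

lemma sum_prodGenerator_mul_sum {Q : ∀ i, P i → P i → R}
    (hQ : ∀ i pi, ∑ q, Q i pi q = 0) (p : ∀ i, P i) (f : ∀ i, P i → R) :
    ∑ p', prodGenerator Q p p' * ∑ i, f i (p' i) = ∑ i, ∑ q, Q i (p i) q * f i q := by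
  simp only [prodGenerator, sum_mul]
  rw [sum_comm]
  refine sum_congr rfl fun i _ => ?_
  refine (sum_congr rfl fun p' _ => by ring).trans
    ((sum_prod_erase_ite_mul p i fun p' => Q i (p i) (p' i) * ∑ k, f k (p' k)).trans ?_)
  simp only [Function.apply_update (fun k => f k), sum_update_of_mem (mem_univ i),
    Function.update_self, mul_add, sum_add_distrib, ← sum_mul, hQ, zero_mul, add_zero]

end ProductGenerator

lemma sum_sum_erase_comm {ι M : Type*} [Fintype ι] [DecidableEq ι] [AddCommGroup M]
    (F : ι → ι → M) :
    ∑ i, ∑ j ∈ univ.erase i, F i j = ∑ j, ∑ i ∈ univ.erase j, F i j := by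
  simp only [sum_erase_eq_sub (mem_univ _), sum_sub_distrib]
  rw [sum_comm]

/-- In matrix form: `μᵀ(-Λ + Δ) g = -cᵀ g`. -/
lemma sum_mul_neg_add_sum_erase_eq {ι : Type*} [Fintype ι] [DecidableEq ι]
    {μ lam c g : ι → ℝ} {δ : ι → ι → ℝ}
    (hc : ∀ i, c i = μ i * lam i - ∑ j ∈ univ.erase i, μ j * δ j i) :
    ∑ i, μ i * (-(lam i * g i) + ∑ j ∈ univ.erase i, δ i j * g j) = -∑ i, c i * g i := by
  simp only [hc, mul_add, mul_sum, sum_add_distrib, sub_mul, sum_sub_distrib, sum_mul]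
  rw [sum_sum_erase_comm]
  simp only [mul_neg, sum_neg_distrib, mul_assoc]
  ring

lemma MonotoneOn.apply_sum_le_sum {ι : Type*} {s : Finset ι} (hs : s.Nonempty)
    {ρ : ℝ → ℝ} (hρ : MonotoneOn ρ (Set.Ici 0)) {y z w : ι → ℝ}
    (hy : ∀ j ∈ s, 0 ≤ y j) (hyz : ∀ j ∈ s, y j ≤ z j) (hw : ∀ j ∈ s, 0 ≤ w j)
    (hρz : ∀ j ∈ s, ρ (#s * z j) ≤ w j) :
    ρ (∑ j ∈ s, y j) ≤ ∑ j ∈ s, w j := by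
  obtain ⟨j₀, hj₀, hmax⟩ := exists_max_image s y hs
  have hsum : ∑ j ∈ s, y j ≤ #s * z j₀ :=
    calc ∑ j ∈ s, y j ≤ #s * y j₀ := by simpa using sum_le_card_nsmul s y (y j₀) hmax
      _ ≤ #s * z j₀ := by gcongr; exact hyz j₀ hj₀
  calc ρ (∑ j ∈ s, y j) ≤ ρ (#s * z j₀) :=
        hρ (sum_nonneg hy) ((sum_nonneg hy).trans hsum) hsum
    _ ≤ w j₀ := hρz j₀ hj₀
    _ ≤ ∑ j ∈ s, w j := single_le_sum hw hj₀

lemma apply_sum_erase_le_sum_mul_gain {ι : Type*} [Fintype ι] [DecidableEq ι] [Nontrivial ι]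
    {α αinv γ : ι → ℝ → ℝ} {ρ : ℝ → ℝ} {δ y β : ι → ℝ} (i : ι)
    (hα : ∀ j, StrictMonoOn (α j) (Set.Ici 0)) (hαinv_nonneg : ∀ j s, 0 ≤ s → 0 ≤ αinv j s)
    (hαinv_right : ∀ j s, 0 ≤ s → α j (αinv j s) = s) (hρ : MonotoneOn ρ (Set.Ici 0))
    (hδ : ∀ j, 0 ≤ δ j) (hγ : ∀ j, 0 ≤ γ j (β j)) (hy : ∀ j, 0 ≤ y j) (hβ : ∀ j, 0 ≤ β j)
    (hαy : ∀ j, α j (y j) ≤ β j)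
    (hgain : ∀ j ≠ i, ρ ((Fintype.card ι - 1 : ℝ) * αinv j (β j)) ≤ δ j * γ j (β j)) :
    ρ (∑ j ∈ univ.erase i, y j) ≤ ∑ j ∈ univ.erase i, δ j * γ j (β j) := by
  have hcard : (#(univ.erase i) : ℝ) = Fintype.card ι - 1 := by
    rw [card_erase_of_mem (mem_univ i), card_univ, Nat.cast_pred Fintype.card_pos]
  refine hρ.apply_sum_le_sum (z := fun j => αinv j (β j)) univ_nontrivial.erase_nonempty
    (fun j _ => hy j) (fun j _ => ?_) (fun j _ => mul_nonneg (hδ j) (hγ j)) (fun j hj => ?_)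
  · refine ((hα j).le_iff_le (hy j) (hαinv_nonneg j _ (hβ j))).1 ?_
    rw [hαinv_right j _ (hβ j)]
    exact hαy j
  · rw [hcard]
    exact hgain j (ne_of_mem_erase hj)

theorem compositional_decrease_condition_general
    (N : ℕ) (hN : 2 ≤ N)
    (P : Fin N → Type) [∀ i, Fintype (P i)] [∀ i, Nonempty (P i)]
    [∀ i, DecidableEq (P i)]
    -- subsystem generators with zero row sums
    (Q : ∀ i, P i → P i → ℝ)
    (hQrow : ∀ i (pi : P i), ∑ p'i : P i, Q i pi p'i = 0)
    -- small-gain constants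
    (μ lamHat : Fin N → ℝ) (δHat : Fin N → Fin N → ℝ)
    (hμ : ∀ i, 0 < μ i)
    (hδ : ∀ i j, 0 ≤ δHat i j)
    (c : Fin N → ℝ)
    (hc : ∀ i, c i = μ i * lamHat i - ∑ j ∈ univ.erase i, μ j * δHat j i)
    (hcpos : ∀ i, 0 < c i)
    -- class K∞ functions and the small-gain assumption
    (κ γHat α : Fin N → ℝ → ℝ)
    (hγK : ∀ i, IsKInf (γHat i)) (hαK : ∀ i, IsKInf (α i))
    (αinv : Fin N → ℝ → ℝ)
    (hαinv_nonneg : ∀ i s, 0 ≤ s → 0 ≤ αinv i s)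
    (hαinv_right : ∀ i s, 0 ≤ s → α i (αinv i s) = s)
    (ρ : Fin N → ℝ → ℝ)
    (hρmono : ∀ i, MonotoneOn (ρ i) (Set.Ici 0))
    (hgain1 : ∀ i (s : ℝ), 0 ≤ s → lamHat i * γHat i s ≤ κ i s)
    (hgain2 : ∀ i j, j ≠ i → ∀ s : ℝ, 0 ≤ s →
        ρ i ((N - 1 : ℝ) * αinv j s) ≤ δHat i j * γHat j s)
    -- mode-dependent offsets and the composed offset and decay function
    (ψ : ∀ i, P i → ℝ)
    (ψtot : ℝ) (hψtot : ψtot = ∑ i, μ i * univ.sup' univ_nonempty (ψ i))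
    (κtot : ℝ → ℝ)
    (hκtot : ∀ s : ℝ, κtot s = sInf {t : ℝ | ∃ β : Fin N → ℝ,
        (∀ i, 0 ≤ β i) ∧ (∑ i, μ i * β i) = s ∧ t = ∑ i, c i * γHat i (β i)})
    -- the fixed mode, generator values, barrier values and output bounds
    (p : ∀ i, P i)
    (a : Fin N → ℝ) (b : ∀ i, P i → ℝ) (hb : ∀ i (p'i : P i), 0 ≤ b i p'i)
    (y : Fin N → ℝ) (hy : ∀ i, 0 ≤ y i)
    (hαyb : ∀ i, α i (y i) ≤ b i (p i))
    -- the subsystem dissipation inequalities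
    (hdissip : ∀ i, a i + ∑ p'i : P i, Q i (p i) p'i * b i p'i ≤
        -(κ i (b i (p i))) + ρ i (∑ j ∈ univ.erase i, y j) + ψ i (p i)) :
    ∑ i, μ i * a i
      + ∑ p' : ∀ i, P i,
          (∑ i, Q i (p i) (p' i) * ∏ j ∈ univ.erase i, (if p j = p' j then (1:ℝ) else 0))
            * (∑ i, μ i * b i (p' i))
      ≤ -(κtot (∑ i, μ i * b i (p i))) + ψtot := by
  have hb₀ : ∀ i, 0 ≤ b i (p i) := fun i => hb i (p i)
  have : Nontrivial (Fin N) := Fin.nontrivial_iff_two_le.mpr hN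
  have hρ : ∀ i, ρ i (∑ j ∈ univ.erase i, y j)
      ≤ ∑ j ∈ univ.erase i, δHat i j * γHat j (b j (p j)) := fun i =>
    apply_sum_erase_le_sum_mul_gain i (fun j => (hαK j).2.2.1) hαinv_nonneg hαinv_right
      (hρmono i) (hδ i) (fun j => (hγK j).1 _ (hb₀ j)) hy hb₀ hαyb
      fun j hj => by simpa using hgain2 i j hj _ (hb₀ j)
  have hκtot_le : κtot (∑ i, μ i * b i (p i)) ≤ ∑ i, c i * γHat i (b i (p i)) := by
    rw [hκtot]
    refine csInf_le ⟨0, ?_⟩ ⟨fun i => b i (p i), hb₀, rfl, rfl⟩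
    rintro t ⟨β, hβ, -, rfl⟩
    exact sum_nonneg fun i _ => mul_nonneg (hcpos i).le ((hγK i).1 _ (hβ i))
  have hgen := sum_prodGenerator_mul_sum hQrow p fun i q => μ i * b i q
  simp only [prodGenerator] at hgen
  rw [hgen, hψtot, ← sum_add_distrib]
  calc ∑ i, (μ i * a i + ∑ q, Q i (p i) q * (μ i * b i q))
      = ∑ i, μ i * (a i + ∑ q, Q i (p i) q * b i q) := by
        simp only [mul_add, mul_sum, mul_left_comm (μ _)]
    _ ≤ ∑ i, μ i * (-(lamHat i * γHat i (b i (p i)))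
          + ∑ j ∈ univ.erase i, δHat i j * γHat j (b j (p j)) + univ.sup' univ_nonempty (ψ i)) := by
        refine sum_le_sum fun i _ => mul_le_mul_of_nonneg_left ?_ (hμ i).le
        linarith [hdissip i, hgain1 i _ (hb₀ i), hρ i, le_sup' (ψ i) (mem_univ (p i))]
    _ = -∑ i, c i * γHat i (b i (p i)) + ∑ i, μ i * univ.sup' univ_nonempty (ψ i) := by
        rw [← sum_mul_neg_add_sum_erase_eq hc, ← sum_add_distrib]
        exact sum_congr rfl fun i _ => by ring
    _ ≤ _ := by linarith

/-- The full pointwise form of condition (B3) in the compositionality theorem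
(Theorem 4.4): if each subsystem pseudo-barrier satisfies its dissipation inequality
(`a i` playing the role of `ℒB_{i,p_i}(x_i)`, `b i p'` of `B_{i,p'}(x_i)`, and `y j` of
`‖h_j(x_j)‖²`), then under the small-gain conditions the composed function
`B(x,p) = ∑ i, μ i * b i (p i)` satisfies the composed decrease condition with
`κ(s) = inf{∑ i, c_i γ̂_i(β_i) : β ≥ 0, ∑ i μ_i β_i = s}` and
`ψ = ∑ i, μ i * max_{p_i} ψ_{i,p_i}`. -/
theorem compositional_decrease_condition
    (N : ℕ) (hN : 2 ≤ N)
    (P : Fin N → Type) [∀ i, Fintype (P i)] [∀ i, Nonempty (P i)]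
    [∀ i, DecidableEq (P i)]
    -- subsystem generators with zero row sums
    (Q : ∀ i, P i → P i → ℝ)
    (hQrow : ∀ i (pi : P i), ∑ p'i : P i, Q i pi p'i = 0)
    -- small-gain constants
    (μ lamHat : Fin N → ℝ) (δHat : Fin N → Fin N → ℝ)
    (hμ : ∀ i, 0 < μ i) (hlamHat : ∀ i, 0 < lamHat i)
    (hδ : ∀ i j, 0 ≤ δHat i j) (hδdiag : ∀ i, δHat i i = 0)
    (c : Fin N → ℝ)
    (hc : ∀ i, c i = μ i * lamHat i - ∑ j ∈ univ.erase i, μ j * δHat j i)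
    (hcpos : ∀ i, 0 < c i)
    -- class K∞ functions and the small-gain assumption
    (κ γHat α : Fin N → ℝ → ℝ)
    (hκK : ∀ i, IsKInf (κ i)) (hγK : ∀ i, IsKInf (γHat i)) (hαK : ∀ i, IsKInf (α i))
    (αinv : Fin N → ℝ → ℝ)
    (hαinv_nonneg : ∀ i s, 0 ≤ s → 0 ≤ αinv i s)
    (hαinv_right : ∀ i s, 0 ≤ s → α i (αinv i s) = s)
    (hαinv_left : ∀ i t, 0 ≤ t → αinv i (α i t) = t)
    (ρ : Fin N → ℝ → ℝ)
    (hρmono : ∀ i, MonotoneOn (ρ i) (Set.Ici 0))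
    (hρnonneg : ∀ i s, 0 ≤ s → 0 ≤ ρ i s)
    (hgain1 : ∀ i (s : ℝ), 0 ≤ s → lamHat i * γHat i s ≤ κ i s)
    (hgain2 : ∀ i j, j ≠ i → ∀ s : ℝ, 0 ≤ s →
        ρ i ((N - 1 : ℝ) * αinv j s) ≤ δHat i j * γHat j s)
    -- mode-dependent offsets and the composed offset and decay function
    (ψ : ∀ i, P i → ℝ) (hψ : ∀ i (pi : P i), 0 ≤ ψ i pi)
    (ψtot : ℝ) (hψtot : ψtot = ∑ i, μ i * univ.sup' univ_nonempty (ψ i))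
    (κtot : ℝ → ℝ)
    (hκtot : ∀ s : ℝ, κtot s = sInf {t : ℝ | ∃ β : Fin N → ℝ,
        (∀ i, 0 ≤ β i) ∧ (∑ i, μ i * β i) = s ∧ t = ∑ i, c i * γHat i (β i)})
    -- the fixed mode, generator values, barrier values and output bounds
    (p : ∀ i, P i)
    (a : Fin N → ℝ) (b : ∀ i, P i → ℝ) (hb : ∀ i (p'i : P i), 0 ≤ b i p'i)
    (y : Fin N → ℝ) (hy : ∀ i, 0 ≤ y i)
    (hαyb : ∀ i, α i (y i) ≤ b i (p i))
    -- the subsystem dissipation inequalities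
    (hdissip : ∀ i, a i + ∑ p'i : P i, Q i (p i) p'i * b i p'i ≤
        -(κ i (b i (p i))) + ρ i (∑ j ∈ univ.erase i, y j) + ψ i (p i)) :
    ∑ i, μ i * a i
      + ∑ p' : ∀ i, P i,
          (∑ i, Q i (p i) (p' i) * ∏ j ∈ univ.erase i, (if p j = p' j then (1:ℝ) else 0))
            * (∑ i, μ i * b i (p' i))
      ≤ -(κtot (∑ i, μ i * b i (p i))) + ψtot :=
  compositional_decrease_condition_general N hN P Q hQrow μ lamHat δHat hμ hδ c hc hcpos κ γHat α
    hγK hαK αinv hαinv_nonneg hαinv_right ρ hρmono hgain1 hgain2 ψ ψtot hψtot κtot hκtot p a b hb y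
    hy hαyb hdissip
end
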